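/- With I_j as above, assume ω^{1/2}χ ∈ L² and ω^{3/2−σ}χ ∈ L² for σ ∈ [1/2, 1]. Then for all q₁, q₂ ∈ ℝ^{dn} and α₁, α₂ ∈ G^σ := {α : ω^σ α ∈ L²}, one has |∇_{q_{j}} I_j(q₁,α₁) − ∇_{q_{j}} I_j(q₂,α₂)| ≤ 4π ‖ω^{1/2}χ‖_{L²} ‖α₁ − α₂‖_{L²} + 8√2 π² ‖ω^{3/2−σ}χ‖_{L²} |q_{1j} − q_{2j}| ‖α₂‖_{G^σ}. -/

import Mathlib

open MeasureTheory

noncomputable section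

/-- The dispersion relation ω(k) = √(|k|² + m²). -/
def omega (d : ℕ) (m : ℝ) (k : EuclideanSpace ℝ (Fin d)) : ℝ :=
  Real.sqrt (‖k‖ ^ 2 + m ^ 2)

/-- The i-th component of the gradient
∇_{q_j} I_j(q,α) = ∫ 2πi k (χ(k)/√ω(k)) [α(k) e^{2πi k·q_j} − conj(α(k)) e^{−2πi k·q_j}] dk. -/
def gradI (d : ℕ) (m : ℝ) (χ : EuclideanSpace ℝ (Fin d) → ℝ)
    (qj : EuclideanSpace ℝ (Fin d)) (α : EuclideanSpace ℝ (Fin d) → ℂ) (i : Fin d) : ℂ :=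
  ∫ k : EuclideanSpace ℝ (Fin d),
    2 * (Real.pi : ℂ) * Complex.I * ((k i : ℝ) : ℂ) *
      ((χ k / Real.sqrt (omega d m k) : ℝ) : ℂ) *
      (α k * Complex.exp (((2 * Real.pi * ∑ l, k l * qj l : ℝ) : ℂ) * Complex.I) -
        (starRingEnd ℂ) (α k) *
          Complex.exp (-(((2 * Real.pi * ∑ l, k l * qj l : ℝ) : ℂ) * Complex.I)))

/-- The G^σ norm ‖α‖_{G^σ} = ‖ω^σ α‖_{L²}. -/
def Gnorm (d : ℕ) (m σ : ℝ) (α : EuclideanSpace ℝ (Fin d) → ℂ) : ℝ :=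
  (eLpNorm (fun k => ((omega d m k ^ σ : ℝ) : ℂ) * α k) 2 volume).toReal

/-!
The gradient is the integral of the vector field `k ↦ 2πi (χ/√ω)(k) F(k) k`, where
`F = z - conj z` with `z = α(k) e^{iθ}`, `θ = 2π k·q`; so the norm of the difference of two
gradients is at most the integral of the pointwise norm of the difference of the fields.
Pointwise, `|F₁ - F₂| ≤ 2|α₁ - α₂| + 2|α₂| |θ₁ - θ₂|` and `|θ₁ - θ₂| ≤ 2π|k| |q₁ - q₂|`.
Since `|k| ≤ ω`, the two resulting terms are `(ω^{1/2}|χ|)|α₁ - α₂|` and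
`(ω^{3/2-σ}|χ|)(ω^σ|α₂|)`, and Cauchy–Schwarz in `L²` finishes. Since
`|e^{ia} - e^{ib}| ≤ |a - b|`, the second constant comes out as `8π² ≤ 8√2π²`.
-/

open Complex

section CauchySchwarz

variable {X E F : Type*} [MeasurableSpace X] {μ : Measure X}
  [NormedAddCommGroup E] [NormedAddCommGroup F] {f : X → E} {g : X → F}

lemma MeasureTheory.MemLp.integrable_norm_mul_norm (hf : MemLp f 2 μ) (hg : MemLp g 2 μ) :
    Integrable (fun x => ‖f x‖ * ‖g x‖) μ :=
  hf.norm.integrable_mul hg.norm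

lemma integral_norm_mul_norm_le (hf : MemLp f 2 μ) (hg : MemLp g 2 μ) :
    ∫ x, ‖f x‖ * ‖g x‖ ∂μ ≤ (eLpNorm f 2 μ).toReal * (eLpNorm g 2 μ).toReal := by
  have h2 : ENNReal.ofReal 2 = 2 := by norm_num
  have := integral_mul_norm_le_Lp_mul_Lq (μ := μ) Real.HolderConjugate.two_two
    (h2 ▸ hf.norm) (h2 ▸ hg.norm)
  rw [hf.eLpNorm_eq_integral_rpow_norm two_ne_zero ENNReal.ofNat_ne_top,
    hg.eLpNorm_eq_integral_rpow_norm two_ne_zero ENNReal.ofNat_ne_top,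
    ENNReal.toReal_ofReal (by positivity), ENNReal.toReal_ofReal (by positivity)]
  simpa using this

end CauchySchwarz

lemma AEMeasurable.of_mul_left {X G₀ : Type*} [MeasurableSpace X] {μ : Measure X}
    [GroupWithZero G₀] [MeasurableSpace G₀] [MeasurableMul₂ G₀] [MeasurableInv G₀]
    {g f : X → G₀} (hg : Measurable g) (hg₀ : ∀ x, g x ≠ 0)
    (h : AEMeasurable (fun x => g x * f x) μ) : AEMeasurable f μ := by
  have hf : f = fun x => (g x)⁻¹ * (g x * f x) :=
    funext fun x => (inv_mul_cancel_left₀ (hg₀ x) _).symm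
  exact hf ▸ hg.inv.aemeasurable.mul h

namespace Complex

lemma norm_sub_conj_le (x : ℂ) : ‖x - (starRingEnd ℂ) x‖ ≤ 2 * ‖x‖ := by
  simpa [two_mul] using norm_sub_le x ((starRingEnd ℂ) x)

lemma norm_exp_ofReal_mul_I_sub_le (a b : ℝ) : ‖exp (a * I) - exp (b * I)‖ ≤ |a - b| := by
  have h : exp (a * I) - exp (b * I) = exp (b * I) * (exp (I * ↑(a - b)) - 1) := by
    rw [mul_sub, ← exp_add, mul_one]; congr 2; push_cast; ring
  rw [h, norm_mul, norm_exp_ofReal_mul_I, one_mul, ← Real.norm_eq_abs]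
  exact Real.norm_exp_I_mul_ofReal_sub_one_le

end Complex

def fieldTerm (z : ℂ) (θ : ℝ) : ℂ :=
  z * exp (θ * I) - (starRingEnd ℂ) z * exp (-(θ * I))

lemma fieldTerm_eq_sub_conj (z : ℂ) (θ : ℝ) :
    fieldTerm z θ = z * exp (θ * I) - (starRingEnd ℂ) (z * exp (θ * I)) := by
  rw [fieldTerm, map_mul, ← exp_conj, map_mul, conj_ofReal, conj_I, mul_neg]

lemma norm_fieldTerm_le (z : ℂ) (θ : ℝ) : ‖fieldTerm z θ‖ ≤ 2 * ‖z‖ := by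
  simpa [fieldTerm_eq_sub_conj, norm_exp_ofReal_mul_I] using norm_sub_conj_le (z * exp (θ * I))

lemma norm_fieldTerm_sub_le (z w : ℂ) (a b : ℝ) :
    ‖fieldTerm z a - fieldTerm w b‖ ≤ 2 * ‖z - w‖ + 2 * ‖w‖ * |a - b| := by
  set x := z * exp (a * I)
  set y := w * exp (b * I)
  have hxy : ‖x - y‖ ≤ ‖z - w‖ + ‖w‖ * |a - b| := calc
    ‖x - y‖ = ‖(z - w) * exp (a * I) + w * (exp (a * I) - exp (b * I))‖ := by congr 1; ring
    _ ≤ ‖z - w‖ + ‖w‖ * |a - b| := by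
      refine (norm_add_le _ _).trans ?_
      rw [norm_mul, norm_mul, norm_exp_ofReal_mul_I, mul_one]
      gcongr
      exact norm_exp_ofReal_mul_I_sub_le a b
  calc ‖fieldTerm z a - fieldTerm w b‖ = ‖(x - y) - (starRingEnd ℂ) (x - y)‖ := by
        rw [fieldTerm_eq_sub_conj, fieldTerm_eq_sub_conj, map_sub]; congr 1; ring
    _ ≤ 2 * ‖x - y‖ := norm_sub_conj_le _
    _ ≤ 2 * ‖z - w‖ + 2 * ‖w‖ * |a - b| := by linarith

variable {d : ℕ}

def phase (q k : EuclideanSpace ℝ (Fin d)) : ℝ := 2 * Real.pi * ∑ l, k l * q l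

lemma phase_eq_inner (q k : EuclideanSpace ℝ (Fin d)) : phase q k = 2 * Real.pi * inner ℝ k q := by
  simp [phase, PiLp.inner_apply, mul_comm]

lemma abs_phase_sub_le (q₁ q₂ k : EuclideanSpace ℝ (Fin d)) :
    |phase q₁ k - phase q₂ k| ≤ 2 * Real.pi * (‖k‖ * ‖q₁ - q₂‖) := by
  rw [phase_eq_inner, phase_eq_inner, ← mul_sub, ← inner_sub_right, abs_mul,
    abs_of_pos Real.two_pi_pos]
  gcongr
  exact abs_real_inner_le_norm k (q₁ - q₂)

def ofRealVec (k : EuclideanSpace ℝ (Fin d)) : EuclideanSpace ℂ (Fin d) :=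
  WithLp.toLp 2 fun i => (k i : ℂ)

lemma norm_ofRealVec (k : EuclideanSpace ℝ (Fin d)) : ‖ofRealVec k‖ = ‖k‖ := by
  simp [ofRealVec, EuclideanSpace.norm_eq]

@[fun_prop]
lemma continuous_ofRealVec : Continuous (ofRealVec (d := d)) := by
  unfold ofRealVec; fun_prop

section Omega

variable {m : ℝ}

lemma omega_pos (hm : m ≠ 0) (k : EuclideanSpace ℝ (Fin d)) : 0 < omega d m k :=
  Real.sqrt_pos.2 (add_pos_of_nonneg_of_pos (sq_nonneg _) (sq_pos_iff.2 hm))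

lemma norm_le_omega (k : EuclideanSpace ℝ (Fin d)) : ‖k‖ ≤ omega d m k :=
  Real.le_sqrt_of_sq_le (by nlinarith [sq_nonneg m])

lemma le_omega (k : EuclideanSpace ℝ (Fin d)) : m ≤ omega d m k :=
  Real.le_sqrt_of_sq_le (by nlinarith [sq_nonneg ‖k‖])

@[fun_prop]
lemma continuous_omega : Continuous (omega d m) := by
  unfold omega; fun_prop

lemma norm_div_sqrt_omega_le (hm : m ≠ 0) (k : EuclideanSpace ℝ (Fin d)) :
    ‖k‖ / √(omega d m k) ≤ √(omega d m k) := by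
  rw [div_le_iff₀ (Real.sqrt_pos.2 (omega_pos hm k)), Real.mul_self_sqrt (omega_pos hm k).le]
  exact norm_le_omega k

lemma sq_norm_div_sqrt_omega_le (hm : m ≠ 0) (σ : ℝ) (k : EuclideanSpace ℝ (Fin d)) :
    ‖k‖ ^ 2 / √(omega d m k) ≤ omega d m k ^ ((3 : ℝ) / 2 - σ) * omega d m k ^ σ := by
  have hω := omega_pos hm k
  rw [← Real.rpow_add hω, sub_add_cancel, div_le_iff₀ (Real.sqrt_pos.2 hω), Real.sqrt_eq_rpow,
    ← Real.rpow_add hω, show (3 : ℝ) / 2 + 1 / 2 = (2 : ℕ) by norm_num, Real.rpow_natCast]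
  exact pow_le_pow_left₀ (norm_nonneg k) (norm_le_omega k) 2

lemma aemeasurable_of_memLp_sqrt_omega_mul (hm : m ≠ 0) {χ : EuclideanSpace ℝ (Fin d) → ℝ}
    (hχ : MemLp (fun k => √(omega d m k) * χ k) 2 volume) : AEMeasurable χ volume :=
  hχ.1.aemeasurable.of_mul_left continuous_omega.measurable.sqrt
    fun k => (Real.sqrt_pos.2 (omega_pos hm k)).ne'

lemma memLp_of_memLp_omega_rpow_mul (hm : 0 < m) {σ : ℝ} (hσ : 0 ≤ σ)
    {α : EuclideanSpace ℝ (Fin d) → ℂ}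
    (hα : MemLp (fun k => ((omega d m k ^ σ : ℝ) : ℂ) * α k) 2 volume) : MemLp α 2 volume := by
  have hωσ k : 0 < omega d m k ^ σ := Real.rpow_pos_of_pos (omega_pos hm.ne' k) σ
  have hα_meas : AEMeasurable α volume :=
    hα.1.aemeasurable.of_mul_left (by fun_prop) fun k => by exact_mod_cast (hωσ k).ne'
  refine hα.of_le_mul hα_meas.aestronglyMeasurable (c := (m ^ σ)⁻¹) (ae_of_all _ fun k => ?_)
  have hmσ : m ^ σ ≤ omega d m k ^ σ := Real.rpow_le_rpow hm.le (le_omega k) hσ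
  rw [norm_mul, Complex.norm_real, Real.norm_of_nonneg (hωσ k).le,
    le_inv_mul_iff₀ (by positivity)]
  gcongr

end Omega

section Integrand

variable {m : ℝ} {χ : EuclideanSpace ℝ (Fin d) → ℝ}

def gradKernel (m : ℝ) (χ : EuclideanSpace ℝ (Fin d) → ℝ) (k : EuclideanSpace ℝ (Fin d))
    (z : ℂ) : EuclideanSpace ℂ (Fin d) :=
  (2 * Real.pi * I * ((χ k / √(omega d m k) : ℝ) : ℂ) * z) • ofRealVec k

def gradIntegrand (m : ℝ) (χ : EuclideanSpace ℝ (Fin d) → ℝ) (q : EuclideanSpace ℝ (Fin d))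
    (α : EuclideanSpace ℝ (Fin d) → ℂ) (k : EuclideanSpace ℝ (Fin d)) :
    EuclideanSpace ℂ (Fin d) :=
  gradKernel m χ k (fieldTerm (α k) (phase q k))

lemma gradKernel_sub (k : EuclideanSpace ℝ (Fin d)) (z w : ℂ) :
    gradKernel m χ k z - gradKernel m χ k w = gradKernel m χ k (z - w) := by
  simp only [gradKernel, ← sub_smul, mul_sub]

lemma norm_gradKernel (k : EuclideanSpace ℝ (Fin d)) (z : ℂ) :
    ‖gradKernel m χ k z‖ = 2 * Real.pi * (‖k‖ / √(omega d m k)) * |χ k| * ‖z‖ := by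
  simp only [gradKernel, norm_smul, norm_mul, norm_ofRealVec, Complex.norm_real, norm_I,
    Real.norm_eq_abs, abs_div, abs_of_nonneg (Real.sqrt_nonneg _), abs_of_pos Real.pi_pos]
  norm_num
  ring

lemma gradI_eq_integral_gradIntegrand_apply {q : EuclideanSpace ℝ (Fin d)}
    {α : EuclideanSpace ℝ (Fin d) → ℂ} (h : Integrable (gradIntegrand m χ q α)) (i : Fin d) :
    gradI d m χ q α i = (∫ k, gradIntegrand m χ q α k) i := by
  have h_proj := (EuclideanSpace.proj (𝕜 := ℂ) i).integral_comp_comm h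
  simp only [EuclideanSpace.coe_proj] at h_proj
  rw [← h_proj, gradI]
  refine integral_congr_ae (ae_of_all _ fun k => ?_)
  simp only [gradIntegrand, gradKernel, ofRealVec, fieldTerm, phase, PiLp.smul_apply, smul_eq_mul]
  ring

lemma norm_gradIntegrand_le (hm : m ≠ 0) (q : EuclideanSpace ℝ (Fin d))
    (α : EuclideanSpace ℝ (Fin d) → ℂ) (k : EuclideanSpace ℝ (Fin d)) :
    ‖gradIntegrand m χ q α k‖ ≤ 4 * Real.pi * (‖√(omega d m k) * χ k‖ * ‖α k‖) := by
  rw [gradIntegrand, norm_gradKernel]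
  calc 2 * Real.pi * (‖k‖ / √(omega d m k)) * |χ k| * ‖fieldTerm (α k) (phase q k)‖
      ≤ 2 * Real.pi * √(omega d m k) * |χ k| * (2 * ‖α k‖) := by
        gcongr
        exacts [norm_div_sqrt_omega_le hm k, norm_fieldTerm_le _ _]
    _ = 4 * Real.pi * (‖√(omega d m k) * χ k‖ * ‖α k‖) := by
        rw [norm_mul, Real.norm_of_nonneg (Real.sqrt_nonneg _), Real.norm_eq_abs]
        ring

lemma norm_gradIntegrand_sub_le (hm : m ≠ 0) (σ : ℝ) (q₁ q₂ : EuclideanSpace ℝ (Fin d))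
    (α₁ α₂ : EuclideanSpace ℝ (Fin d) → ℂ) (k : EuclideanSpace ℝ (Fin d)) :
    ‖gradIntegrand m χ q₁ α₁ k - gradIntegrand m χ q₂ α₂ k‖ ≤
      4 * Real.pi * (‖√(omega d m k) * χ k‖ * ‖α₁ k - α₂ k‖) +
        8 * Real.pi ^ 2 * ‖q₁ - q₂‖ * (‖omega d m k ^ ((3 : ℝ) / 2 - σ) * χ k‖ *
          ‖((omega d m k ^ σ : ℝ) : ℂ) * α₂ k‖) := by
  have hω := omega_pos hm k
  have h_field : ‖fieldTerm (α₁ k) (phase q₁ k) - fieldTerm (α₂ k) (phase q₂ k)‖ ≤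
      2 * ‖α₁ k - α₂ k‖ + 2 * ‖α₂ k‖ * (2 * Real.pi * (‖k‖ * ‖q₁ - q₂‖)) :=
    (norm_fieldTerm_sub_le _ _ _ _).trans (by gcongr; exact abs_phase_sub_le q₁ q₂ k)
  rw [gradIntegrand, gradIntegrand, gradKernel_sub, norm_gradKernel]
  calc 2 * Real.pi * (‖k‖ / √(omega d m k)) * |χ k| *
        ‖fieldTerm (α₁ k) (phase q₁ k) - fieldTerm (α₂ k) (phase q₂ k)‖
      ≤ 2 * Real.pi * (‖k‖ / √(omega d m k)) * |χ k| *
        (2 * ‖α₁ k - α₂ k‖ + 2 * ‖α₂ k‖ * (2 * Real.pi * (‖k‖ * ‖q₁ - q₂‖))) := by gcongr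
    _ = 4 * Real.pi * (‖k‖ / √(omega d m k)) * |χ k| * ‖α₁ k - α₂ k‖ +
        8 * Real.pi ^ 2 * ‖q₁ - q₂‖ * (‖k‖ ^ 2 / √(omega d m k)) * |χ k| * ‖α₂ k‖ := by ring
    _ ≤ 4 * Real.pi * √(omega d m k) * |χ k| * ‖α₁ k - α₂ k‖ +
        8 * Real.pi ^ 2 * ‖q₁ - q₂‖ * (omega d m k ^ ((3 : ℝ) / 2 - σ) * omega d m k ^ σ) *
          |χ k| * ‖α₂ k‖ := by
        gcongr
        exacts [norm_div_sqrt_omega_le hm k, sq_norm_div_sqrt_omega_le hm σ k]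
    _ = _ := by
        rw [norm_mul, norm_mul, norm_mul, Complex.norm_real,
          Real.norm_of_nonneg (Real.sqrt_nonneg _), Real.norm_of_nonneg (Real.rpow_nonneg hω.le _),
          Real.norm_of_nonneg (Real.rpow_nonneg hω.le _), Real.norm_eq_abs]
        ring

lemma integrable_gradIntegrand (hm : m ≠ 0) (hχ : MemLp (fun k => √(omega d m k) * χ k) 2 volume)
    {α : EuclideanSpace ℝ (Fin d) → ℂ} (hα : MemLp α 2 volume) (q : EuclideanSpace ℝ (Fin d)) :
    Integrable (gradIntegrand m χ q α) := by
  have hχ_meas := aemeasurable_of_memLp_sqrt_omega_mul hm hχ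
  have hα_meas := hα.1.aemeasurable
  have h_meas : AEMeasurable (gradIntegrand m χ q α) := by
    unfold gradIntegrand gradKernel fieldTerm phase
    fun_prop
  exact ((hχ.integrable_norm_mul_norm hα).const_mul (4 * Real.pi)).mono'
    h_meas.aestronglyMeasurable (ae_of_all _ (norm_gradIntegrand_le hm q α))

lemma integral_norm_gradIntegrand_sub_le (hm : m ≠ 0) {σ : ℝ}
    (hχ₁ : MemLp (fun k => √(omega d m k) * χ k) 2 volume)
    (hχ₂ : MemLp (fun k => omega d m k ^ ((3 : ℝ) / 2 - σ) * χ k) 2 volume)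
    (q₁ q₂ : EuclideanSpace ℝ (Fin d)) {α₁ α₂ : EuclideanSpace ℝ (Fin d) → ℂ}
    (hΔα : MemLp (fun k => α₁ k - α₂ k) 2 volume)
    (hα₂ : MemLp (fun k => ((omega d m k ^ σ : ℝ) : ℂ) * α₂ k) 2 volume) :
    ∫ k, ‖gradIntegrand m χ q₁ α₁ k - gradIntegrand m χ q₂ α₂ k‖ ≤
      4 * Real.pi * ((eLpNorm (fun k => √(omega d m k) * χ k) 2 volume).toReal *
          (eLpNorm (fun k => α₁ k - α₂ k) 2 volume).toReal) +
        8 * Real.pi ^ 2 * ‖q₁ - q₂‖ *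
          ((eLpNorm (fun k => omega d m k ^ ((3 : ℝ) / 2 - σ) * χ k) 2 volume).toReal *
            Gnorm d m σ α₂) := by
  have h_int₁ := hχ₁.integrable_norm_mul_norm hΔα
  have h_int₂ := hχ₂.integrable_norm_mul_norm hα₂
  calc ∫ k, ‖gradIntegrand m χ q₁ α₁ k - gradIntegrand m χ q₂ α₂ k‖
      ≤ ∫ k, (4 * Real.pi * (‖√(omega d m k) * χ k‖ * ‖α₁ k - α₂ k‖) +
          8 * Real.pi ^ 2 * ‖q₁ - q₂‖ * (‖omega d m k ^ ((3 : ℝ) / 2 - σ) * χ k‖ *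
            ‖((omega d m k ^ σ : ℝ) : ℂ) * α₂ k‖)) :=
        integral_mono_of_nonneg (ae_of_all _ fun _ => norm_nonneg _)
          ((h_int₁.const_mul _).add (h_int₂.const_mul _))
          (ae_of_all _ (norm_gradIntegrand_sub_le hm σ _ _ _ _))
    _ = 4 * Real.pi * (∫ k, ‖√(omega d m k) * χ k‖ * ‖α₁ k - α₂ k‖) +
          8 * Real.pi ^ 2 * ‖q₁ - q₂‖ * ∫ k, ‖omega d m k ^ ((3 : ℝ) / 2 - σ) * χ k‖ *
            ‖((omega d m k ^ σ : ℝ) : ℂ) * α₂ k‖ := by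
        rw [integral_add (h_int₁.const_mul _) (h_int₂.const_mul _), integral_const_mul,
          integral_const_mul]
    _ ≤ _ := by
        gcongr
        exacts [integral_norm_mul_norm_le hχ₁ hΔα, integral_norm_mul_norm_le hχ₂ hα₂]

lemma sqrt_sum_norm_gradI_sub_sq {q₁ q₂ : EuclideanSpace ℝ (Fin d)}
    {α₁ α₂ : EuclideanSpace ℝ (Fin d) → ℂ} (hW₁ : Integrable (gradIntegrand m χ q₁ α₁))
    (hW₂ : Integrable (gradIntegrand m χ q₂ α₂)) :
    √(∑ i, ‖gradI d m χ q₁ α₁ i - gradI d m χ q₂ α₂ i‖ ^ 2) =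
      ‖∫ k, (gradIntegrand m χ q₁ α₁ k - gradIntegrand m χ q₂ α₂ k)‖ := by
  simp only [integral_sub hW₁ hW₂, EuclideanSpace.norm_eq, PiLp.sub_apply,
    gradI_eq_integral_gradIntegrand_apply hW₁, gradI_eq_integral_gradIntegrand_apply hW₂]

end Integrand

/-- Lipschitz-type estimate for ∇_{, q_j} I_j: assuming ω^{1/2}χ ∈ L² and ω^{3/2−σ}χ ∈ L²
for σ ∈ [1/2, 1], for all q₁, q₂ ∈ ℝ^{dn} and α₁, α₂ ∈ G^σ,
|∇I_j(q₁,α₁) − ∇I_j(q₂,α₂)| ≤ 4π ‖ω^{1/2}χ‖ ‖α₁−α₂‖_{L²}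
  + 8√2 π² ‖ω^{3/2−σ}χ‖ |q_{1j}−q_{2j}| ‖α₂‖_{G^σ}. -/
theorem gradI_lipschitz (d n : ℕ) (m σ : ℝ) (hm : 0 < m)
    (hσ : σ ∈ Set.Icc (1 / 2 : ℝ) 1)
    (χ : EuclideanSpace ℝ (Fin d) → ℝ)
    (hχ₁ : MemLp (fun k => Real.sqrt (omega d m k) * χ k) 2 volume)
    (hχ₂ : MemLp (fun k => omega d m k ^ ((3 : ℝ) / 2 - σ) * χ k) 2 volume)
    (q₁ q₂ : Fin n → EuclideanSpace ℝ (Fin d)) (j : Fin n)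
    (α₁ α₂ : EuclideanSpace ℝ (Fin d) → ℂ)
    (hα₁ : MemLp (fun k => ((omega d m k ^ σ : ℝ) : ℂ) * α₁ k) 2 volume)
    (hα₂ : MemLp (fun k => ((omega d m k ^ σ : ℝ) : ℂ) * α₂ k) 2 volume) :
    Real.sqrt (∑ i, ‖gradI d m χ (q₁ j) α₁ i - gradI d m χ (q₂ j) α₂ i‖ ^ 2) ≤
      4 * Real.pi *
          (eLpNorm (fun k => Real.sqrt (omega d m k) * χ k) 2 volume).toReal *
          (eLpNorm (fun k => α₁ k - α₂ k) 2 volume).toReal +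
        8 * Real.sqrt 2 * Real.pi ^ 2 *
          (eLpNorm (fun k => omega d m k ^ ((3 : ℝ) / 2 - σ) * χ k) 2 volume).toReal *
          ‖q₁ j - q₂ j‖ * Gnorm d m σ α₂ := by
  have hσ₀ : 0 ≤ σ := by linarith [hσ.1]
  have hα₁' := memLp_of_memLp_omega_rpow_mul hm hσ₀ hα₁
  have hα₂' := memLp_of_memLp_omega_rpow_mul hm hσ₀ hα₂
  have hW₁ := integrable_gradIntegrand hm.ne' hχ₁ hα₁' (q₁ j)
  have hW₂ := integrable_gradIntegrand hm.ne' hχ₁ hα₂' (q₂ j)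
  have h_sqrt2 : 1 ≤ √2 := Real.one_le_sqrt.2 one_le_two
  have h_nonneg : 0 ≤ Real.pi ^ 2 * ‖q₁ j - q₂ j‖ *
      (eLpNorm (fun k => omega d m k ^ ((3 : ℝ) / 2 - σ) * χ k) 2 volume).toReal *
      Gnorm d m σ α₂ := by
    unfold Gnorm; positivity
  rw [sqrt_sum_norm_gradI_sub_sq hW₁ hW₂]
  refine (norm_integral_le_integral_norm _).trans <|
    (integral_norm_gradIntegrand_sub_le hm.ne' hχ₁ hχ₂ _ _ (hα₁'.sub hα₂') hα₂).trans ?_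
  linear_combination 8 * mul_le_mul_of_nonneg_right h_sqrt2 h_nonneg

end
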